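/- arXiv:2305.04597 — 5 statements merged into one kernel-verified Lean document; each statement's English description precedes it below -/
import Mathlib

section
/- For every real p with 0 < p < 1 and all positive integers n and N, the product ∏_{r=1}^{n} (1 - p^{2r})^{N·C(n,r)} is at most 2^{-N·((1+p²)^n - 1)}. -/
/-!
Bound each factor by `1 - x ≤ e^{-x} ≤ 2^{-x}` for `x = p^{2r} ∈ [0, 1]`; the product of the
resulting powers of `2` is `2` to minus `N ∑_{r ≥ 1} C(n,r) (p²)^r = N((1 + p²)^n - 1)`
by the binomial theorem.
-/

open Finset

theorem sum_Icc_one_choose_mul_pow {R : Type*} [CommRing R] (x : R) (n : ℕ) :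
    ∑ r ∈ Icc 1 n, (n.choose r : R) * x ^ r = (1 + x) ^ n - 1 := by
  have hrange : range (n + 1) = insert 0 (Icc 1 n) := by
    ext r; simp only [mem_range, mem_insert, mem_Icc]; omega
  rw [add_comm, add_pow, hrange, sum_insert (by simp)]
  simp only [one_pow, mul_one, pow_zero, Nat.choose_zero_right, Nat.cast_one]
  rw [add_sub_cancel_left]
  exact sum_congr rfl fun r _ => mul_comm _ _

theorem Real.one_sub_le_two_rpow_neg {x : ℝ} (hx : 0 ≤ x) : 1 - x ≤ (2 : ℝ) ^ (-x) := by
  calc 1 - x ≤ Real.exp (-x) := Real.one_sub_le_exp_neg x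
    _ ≤ Real.exp (Real.log 2 * -x) := by
        gcongr
        nlinarith [Real.log_two_lt_d9]
    _ = (2 : ℝ) ^ (-x) := (Real.rpow_def_of_pos two_pos _).symm

theorem Real.one_sub_pow_le_two_rpow {x : ℝ} (hx₀ : 0 ≤ x) (hx₁ : x ≤ 1) (m : ℕ) :
    (1 - x) ^ m ≤ (2 : ℝ) ^ (-(m * x)) := by
  calc (1 - x) ^ m ≤ ((2 : ℝ) ^ (-x)) ^ m :=
        pow_le_pow_left₀ (sub_nonneg.mpr hx₁) (Real.one_sub_le_two_rpow_neg hx₀) m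
    _ = (2 : ℝ) ^ (-(m * x)) := by
        rw [← Real.rpow_mul_natCast two_pos.le]
        ring_nf

theorem Real.prod_one_sub_pow_le_two_rpow {ι : Type*} (s : Finset ι) (x : ι → ℝ) (m : ι → ℕ)
    (hx : ∀ i ∈ s, 0 ≤ x i ∧ x i ≤ 1) :
    ∏ i ∈ s, (1 - x i) ^ m i ≤ (2 : ℝ) ^ (-∑ i ∈ s, (m i : ℝ) * x i) := by
  rw [← sum_neg_distrib, Real.rpow_sum_of_pos two_pos]
  refine prod_le_prod (fun i hi => pow_nonneg (sub_nonneg.mpr (hx i hi).2) _) fun i hi => ?_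
  exact Real.one_sub_pow_le_two_rpow (hx i hi).1 (hx i hi).2 _

theorem stmt_0_general (p : ℝ) (hp0 : 0 < p) (hp1 : p < 1) (n N : ℕ) :
    ∏ r ∈ Finset.Icc 1 n, (1 - p ^ (2 * r)) ^ (N * n.choose r) ≤
      (2 : ℝ) ^ (-((N : ℝ) * ((1 + p ^ 2) ^ n - 1))) := by
  have hexponent : ∑ r ∈ Icc 1 n, ((N * n.choose r : ℕ) : ℝ) * p ^ (2 * r)
      = (N : ℝ) * ((1 + p ^ 2) ^ n - 1) := by
    simp only [← sum_Icc_one_choose_mul_pow, mul_sum, pow_mul, Nat.cast_mul, mul_assoc]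
  rw [← hexponent]
  exact Real.prod_one_sub_pow_le_two_rpow _ _ _ fun r _ =>
    ⟨by positivity, pow_le_one₀ hp0.le hp1.le⟩

/-- For every real `p` with `0 < p < 1` and all positive integers `n` and `N`,
the product `∏_{r=1}^{n} (1 - p^{2r})^{N·C(n,r)}` is at most `2^{-N·((1+p²)^n - 1)}`. -/
theorem stmt_0 (p : ℝ) (hp0 : 0 < p) (hp1 : p < 1) (n N : ℕ) (hn : 0 < n) (hN : 0 < N) :
    ∏ r ∈ Finset.Icc 1 n, (1 - p ^ (2 * r)) ^ (N * n.choose r) ≤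
      (2 : ℝ) ^ (-((N : ℝ) * ((1 + p ^ 2) ^ n - 1))) :=
  stmt_0_general p hp0 hp1 n N
end

section
/- Fix positive integers n and L, a real p with 0 < p < 1, and x, x̃ : Fin n → Bool with Hamming distance r ≥ 1. Let d and d̃ be drawn independently and uniformly from Fin L → Bool, let e_a, ẽ_a be erasure patterns of length n with parameter p, and let e_d, ẽ_d be erasure patterns of length L with parameter p, all six random objects mutually independent. Then the probability of the joint event that (i) every index i with x i ≠ x̃ i satisfies e_a i = true or ẽ_a i = true, and (ii) every index i with e_d i = false and ẽ_d i = false satisfies d i = d̃ i, equals (2p - p²)^r · (1 - (1-p)²/2)^L. -/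
open MeasureTheory

/-- The Bernoulli measure on `Bool` giving probability `p` to `true` (an erased position). -/
noncomputable def bernoulliMeasure (p : ℝ) : Measure Bool :=
  ENNReal.ofReal p • Measure.dirac true + ENNReal.ofReal (1 - p) • Measure.dirac false

/-- An erasure pattern of length `n` with parameter `p`: the coordinates are independent,
each erased (`= true`) with probability `p`. -/
noncomputable def erasureMeasure (n : ℕ) (p : ℝ) : Measure (Fin n → Bool) :=
  Measure.pi fun _ : Fin n => bernoulliMeasure p

/-- The uniform measure on data blocks `Fin L → Bool`. -/
noncomputable def uniformData (L : ℕ) : Measure (Fin L → Bool) :=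
  Measure.pi fun _ : Fin L => bernoulliMeasure (1 / 2)

lemma bern_true (p : ℝ) : bernoulliMeasure p {true} = ENNReal.ofReal p := by
  simp [bernoulliMeasure, Measure.dirac_apply]

lemma bern_false (p : ℝ) : bernoulliMeasure p {false} = ENNReal.ofReal (1 - p) := by
  simp [bernoulliMeasure, Measure.dirac_apply]

lemma bern_prob {p : ℝ} (h0 : 0 ≤ p) (h1 : p ≤ 1) :
    IsProbabilityMeasure (bernoulliMeasure p) := by
  constructor
  simp [bernoulliMeasure, ← ENNReal.ofReal_add h0 (by linarith : (0:ℝ) ≤ 1 - p)]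

lemma pair_pi {ι : Type*} [Fintype ι] {α β : Type*} [MeasurableSpace α] [MeasurableSpace β]
    (μ : ι → Measure α) (ν : ι → Measure β) [∀ i, SigmaFinite (μ i)] [∀ i, SigmaFinite (ν i)]
    (C : ι → Set (α × β)) :
    ((Measure.pi μ).prod (Measure.pi ν)) {z | ∀ i, (z.1 i, z.2 i) ∈ C i}
      = ∏ i, ((μ i).prod (ν i)) (C i) := by
  rw [← (measurePreserving_arrowProdEquivProdArrow α β ι μ ν).map_eq,
      MeasurableEquiv.map_apply]
  have h : (MeasurableEquiv.arrowProdEquivProdArrow α β ι) ⁻¹' {z | ∀ i, (z.1 i, z.2 i) ∈ C i}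
      = Set.pi Set.univ C := by
    ext f
    simp [MeasurableEquiv.arrowProdEquivProdArrow, Equiv.arrowProdEquivProdArrow, Set.mem_pi]
  rw [h, Measure.pi_pi]

-- two-pi-measure event lemma specialized computations
-- the shuffling equiv
def shuffle (A D : Type*) [MeasurableSpace A] [MeasurableSpace D] :
    (A × A) × (D × (D × (D × D))) ≃ᵐ D × (D × (A × (A × (D × D)))) :=
  MeasurableEquiv.prodComm.trans <| MeasurableEquiv.prodAssoc.trans <|
    ((MeasurableEquiv.refl D).prodCongr MeasurableEquiv.prodAssoc).trans <|
    ((MeasurableEquiv.refl D).prodCongr ((MeasurableEquiv.refl D).prodCongr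
        MeasurableEquiv.prodComm)).trans <|
    ((MeasurableEquiv.refl D).prodCongr ((MeasurableEquiv.refl D).prodCongr
        MeasurableEquiv.prodAssoc))

lemma shuffle_mp (A D : Type*) [MeasurableSpace A] [MeasurableSpace D]
    (mu : Measure A) (nu1 nu2 : Measure D) [SFinite mu] [SFinite nu1] [SFinite nu2] :
    MeasurePreserving (⇑(shuffle A D)) ((mu.prod mu).prod (nu1.prod (nu1.prod (nu2.prod nu2))))
      (nu1.prod (nu1.prod (mu.prod (mu.prod (nu2.prod nu2))))) := by
  have m1 : MeasurePreserving Prod.swap ((mu.prod mu).prod (nu1.prod (nu1.prod (nu2.prod nu2))))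
      ((nu1.prod (nu1.prod (nu2.prod nu2))).prod (mu.prod mu)) :=
    Measure.measurePreserving_swap
  have m2 := (measurePreserving_prodAssoc nu1 (nu1.prod (nu2.prod nu2)) (mu.prod mu)).comp m1
  have m3 := ((MeasurePreserving.id nu1).prod
      (measurePreserving_prodAssoc nu1 (nu2.prod nu2) (mu.prod mu))).comp m2
  have m4a : MeasurePreserving Prod.swap ((nu2.prod nu2).prod (mu.prod mu))
      ((mu.prod mu).prod (nu2.prod nu2)) := Measure.measurePreserving_swap
  have m4 := ((MeasurePreserving.id nu1).prod ((MeasurePreserving.id nu1).prod m4a)).comp m3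
  have m5 := ((MeasurePreserving.id nu1).prod ((MeasurePreserving.id nu1).prod
      (measurePreserving_prodAssoc mu mu (nu2.prod nu2)))).comp m4
  exact m5


/-- For addresses `x x̃ : Fin n → Bool` at Hamming distance `r ≥ 1`,
independent uniform data blocks `d, d̃` of length `L`, address erasure patterns `eₐ, ẽₐ` of
length `n` and data erasure patterns `e_d, ẽ_d` of length `L` (all six mutually independent),
the probability that (i) every index where `x` and `x̃` differ is erased in `eₐ` or `ẽₐ`, and
(ii) `d` and `d̃` agree at every position non-erased in both `e_d` and `ẽ_d`, equals
`(2p - p²)^r · (1 - (1-p)²/2)^L`.  Coordinates of `ω`: `d, d̃, eₐ, ẽₐ, e_d, ẽ_d`. -/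
theorem stmt_4 (n L : ℕ) (hn : 0 < n) (hL : 0 < L) (p : ℝ) (hp0 : 0 < p) (hp1 : p < 1)
    (x x' : Fin n → Bool) (r : ℕ) (hr : 1 ≤ r)
    (hdist : (Finset.univ.filter fun i => x i ≠ x' i).card = r) :
    ((uniformData L).prod ((uniformData L).prod ((erasureMeasure n p).prod
        ((erasureMeasure n p).prod ((erasureMeasure L p).prod (erasureMeasure L p))))))
      {ω : (Fin L → Bool) × (Fin L → Bool) × (Fin n → Bool) × (Fin n → Bool) ×
            (Fin L → Bool) × (Fin L → Bool) |
        (∀ i : Fin n, x i ≠ x' i → ω.2.2.1 i = true ∨ ω.2.2.2.1 i = true) ∧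
        (∀ i : Fin L, ω.2.2.2.2.1 i = false → ω.2.2.2.2.2 i = false → ω.1 i = ω.2.1 i)}
      = ENNReal.ofReal ((2 * p - p ^ 2) ^ r * (1 - (1 - p) ^ 2 / 2) ^ L) := by
  classical
  haveI hbp : IsProbabilityMeasure (bernoulliMeasure p) := bern_prob hp0.le hp1.le
  haveI hbh : IsProbabilityMeasure (bernoulliMeasure (1/2 : ℝ)) :=
    bern_prob (by norm_num) (by norm_num)
  have h1p : (0:ℝ) ≤ 1 - p := by linarith
  simp only [erasureMeasure, uniformData]
  set b : Measure Bool := bernoulliMeasure p with hb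
  set h : Measure Bool := bernoulliMeasure (1/2 : ℝ) with hh
  set E : Measure (Fin n → Bool) := Measure.pi (fun _ : Fin n => b) with hE
  set F : Measure (Fin L → Bool) := Measure.pi (fun _ : Fin L => b) with hF
  set U : Measure (Fin L → Bool) := Measure.pi (fun _ : Fin L => h) with hU
  set A' : Set ((Fin n → Bool) × (Fin n → Bool)) :=
    {z | ∀ i, (z.1 i, z.2 i) ∈
      {w : Bool × Bool | x i ≠ x' i → (w.1 = true ∨ w.2 = true)}} with hA'
  set B' : Set ((Fin L → Bool) × ((Fin L → Bool) × ((Fin L → Bool) × (Fin L → Bool)))) :=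
    {z | ∀ i, z.2.2.1 i = false → z.2.2.2 i = false → z.1 i = z.2.1 i} with hB'
  -- step 1 : shuffle to decouple
  have mp := shuffle_mp (Fin n → Bool) (Fin L → Bool) E U F
  rw [← mp.map_eq, MeasurableEquiv.map_apply]
  have hpre : (⇑(shuffle (Fin n → Bool) (Fin L → Bool))) ⁻¹'
      {ω : (Fin L → Bool) × (Fin L → Bool) × (Fin n → Bool) × (Fin n → Bool) ×
            (Fin L → Bool) × (Fin L → Bool) |
        (∀ i : Fin n, x i ≠ x' i → ω.2.2.1 i = true ∨ ω.2.2.2.1 i = true) ∧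
        (∀ i : Fin L, ω.2.2.2.2.1 i = false → ω.2.2.2.2.2 i = false → ω.1 i = ω.2.1 i)}
      = A' ×ˢ B' := by
    ext ⟨⟨a, a'⟩, d, d', f, f'⟩
    simp [shuffle, A', B', MeasurableEquiv.prodAssoc, MeasurableEquiv.prodComm,
      MeasurableEquiv.prodCongr, Set.mem_prod]
  rw [hpre, Measure.prod_prod]
  -- step 2 : the address factor
  have hAval : (E.prod E) A' = ENNReal.ofReal (1 - (1 - p) ^ 2) ^ r := by
    rw [hE, hA', pair_pi]
    have hCi : ∀ i : Fin n, (b.prod b) {w : Bool × Bool | x i ≠ x' i →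
        (w.1 = true ∨ w.2 = true)} =
        if x i ≠ x' i then ENNReal.ofReal (1 - (1 - p) ^ 2) else 1 := by
      intro i
      by_cases hxi : x i ≠ x' i
      · rw [if_pos hxi]
        have hset : {w : Bool × Bool | x i ≠ x' i → (w.1 = true ∨ w.2 = true)}
            = ({((false : Bool), (false : Bool))} : Set (Bool × Bool))ᶜ := by
          ext ⟨u, v⟩
          simp [hxi]
          cases u <;> cases v <;> simp
        rw [hset, prob_compl_eq_one_sub (measurableSet_singleton _),
          ← Set.singleton_prod_singleton, Measure.prod_prod, hb, bern_false,
          ← ENNReal.ofReal_mul h1p, ← sq, ← ENNReal.ofReal_one,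
          ← ENNReal.ofReal_sub _ (sq_nonneg _)]
      · rw [if_neg hxi]
        have hset : {w : Bool × Bool | x i ≠ x' i → (w.1 = true ∨ w.2 = true)}
            = Set.univ := by
          ext w; simp; intro hc; exact absurd hc hxi
        rw [hset]
        exact measure_univ
    rw [Finset.prod_congr rfl fun i _ => hCi i, Finset.prod_ite, Finset.prod_const,
      Finset.prod_const_one, mul_one, hdist]
  -- step 3 : the data factor
  have hBval : (U.prod (U.prod (F.prod F))) B' =
      ENNReal.ofReal (1 - (1 - p) ^ 2 / 2) ^ L := by
    rw [← (measurePreserving_prodAssoc U U (F.prod F)).map_eq, MeasurableEquiv.map_apply]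
    have hpre2 : (⇑(MeasurableEquiv.prodAssoc :
          ((Fin L → Bool) × (Fin L → Bool)) × ((Fin L → Bool) × (Fin L → Bool)) ≃ᵐ _)) ⁻¹' B'
        = {z : ((Fin L → Bool) × (Fin L → Bool)) × ((Fin L → Bool) × (Fin L → Bool)) |
            ∀ i, z.2.1 i = false → z.2.2 i = false → z.1.1 i = z.1.2 i} := by
      ext ⟨⟨d, d'⟩, f, f'⟩
      simp [MeasurableEquiv.prodAssoc, hB']
    rw [hpre2]
    have mpU := measurePreserving_arrowProdEquivProdArrow Bool Bool (Fin L)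
      (fun _ => h) (fun _ => h)
    have mpF := measurePreserving_arrowProdEquivProdArrow Bool Bool (Fin L)
      (fun _ => b) (fun _ => b)
    have mp2 := mpU.prod mpF
    rw [← mp2.map_eq,
      show (Prod.map (⇑(MeasurableEquiv.arrowProdEquivProdArrow Bool Bool (Fin L)))
          (⇑(MeasurableEquiv.arrowProdEquivProdArrow Bool Bool (Fin L))))
        = ⇑((MeasurableEquiv.arrowProdEquivProdArrow Bool Bool (Fin L)).prodCongr
            (MeasurableEquiv.arrowProdEquivProdArrow Bool Bool (Fin L))) from rfl,
      MeasurableEquiv.map_apply]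
    have hpre3 : (⇑((MeasurableEquiv.arrowProdEquivProdArrow Bool Bool (Fin L)).prodCongr
          (MeasurableEquiv.arrowProdEquivProdArrow Bool Bool (Fin L)))) ⁻¹'
        {z : ((Fin L → Bool) × (Fin L → Bool)) × ((Fin L → Bool) × (Fin L → Bool)) |
            ∀ i, z.2.1 i = false → z.2.2 i = false → z.1.1 i = z.1.2 i}
        = {z : (Fin L → Bool × Bool) × (Fin L → Bool × Bool) | ∀ i, (z.1 i, z.2 i) ∈
            {w : (Bool × Bool) × (Bool × Bool) |
              w.2.1 = false → w.2.2 = false → w.1.1 = w.1.2}} := by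
      ext ⟨g1, g2⟩
      simp [MeasurableEquiv.prodCongr, MeasurableEquiv.arrowProdEquivProdArrow,
        Equiv.arrowProdEquivProdArrow]
    rw [hpre3, pair_pi]
    have hc : ((h.prod h).prod (b.prod b))
        {w : (Bool × Bool) × (Bool × Bool) |
          w.2.1 = false → w.2.2 = false → w.1.1 = w.1.2}
        = ENNReal.ofReal (1 - (1 - p) ^ 2 / 2) := by
      have hset : {w : (Bool × Bool) × (Bool × Bool) |
            w.2.1 = false → w.2.2 = false → w.1.1 = w.1.2}
          = ((({((true : Bool), (false : Bool)), ((false : Bool), (true : Bool))} :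
              Set (Bool × Bool)) ×ˢ ({((false : Bool), (false : Bool))} :
              Set (Bool × Bool)))ᶜ) := by
        ext ⟨⟨u, v⟩, ⟨s, t⟩⟩
        cases u <;> cases v <;> cases s <;> cases t <;> simp
      rw [hset, prob_compl_eq_one_sub (Set.toFinite _).measurableSet, Measure.prod_prod]
      have hpair : (h.prod h) ({((true : Bool), (false : Bool)),
          ((false : Bool), (true : Bool))} : Set (Bool × Bool)) = ENNReal.ofReal (1/2) := by
        rw [Set.insert_eq,
          measure_union (by simp) (measurableSet_singleton _),
          ← Set.singleton_prod_singleton, ← Set.singleton_prod_singleton,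
          Measure.prod_prod, Measure.prod_prod, hh, bern_true, bern_false,
          ← ENNReal.ofReal_mul (by norm_num), ← ENNReal.ofReal_mul (by norm_num),
          ← ENNReal.ofReal_add (by norm_num) (by norm_num)]
        norm_num
      rw [hpair, ← Set.singleton_prod_singleton, Measure.prod_prod, hb, bern_false,
        ← ENNReal.ofReal_mul h1p, ← sq, ← ENNReal.ofReal_mul (by norm_num),
        ← ENNReal.ofReal_one, ← ENNReal.ofReal_sub _ (by positivity)]
      congr 1
      ring
    rw [Finset.prod_congr rfl fun i _ => hc, Finset.prod_const, Finset.card_univ,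
      Fintype.card_fin]
  rw [hAval, hBval, ← ENNReal.ofReal_pow (by nlinarith), ← ENNReal.ofReal_pow (by nlinarith),
    ← ENNReal.ofReal_mul (pow_nonneg (by nlinarith) r)]
  congr 2
  ring
end

section
/- Let a > 1 be real. Then for every real N > 0, log₂ N + (log₂ a)/N ≥ log₂(ln a) + (log₂ a)/(ln a); that is, the function N ↦ log₂ N + (log₂ a)/N on (0,∞) attains its minimum at N = ln a. -/
open Real

/- The tangent-line bound `log x ≤ x - 1` at `x = ln a / N` gives
`ln ln a + 1 ≤ ln N + ln a / N`; dividing by `ln b > 0` turns this into the claim in base `b`,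
since `log_b a / ln a = 1 / ln b`. -/

lemma Real.log_add_one_le_log_add_div {L N : ℝ} (hL : 0 < L) (hN : 0 < N) :
    log L + 1 ≤ log N + L / N := by
  have h := log_le_sub_one_of_pos (div_pos hL hN)
  rw [log_div hL.ne' hN.ne'] at h
  linarith

lemma Real.logb_log_add_logb_div_log_le {b a N : ℝ} (hb : 1 < b) (ha : 1 < a) (hN : 0 < N) :
    logb b (log a) + logb b a / log a ≤ logb b N + logb b a / N := by
  have hL : 0 < log a := log_pos ha
  have hlogb : 0 < log b := log_pos hb
  have key := log_add_one_le_log_add_div hL hN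
  calc logb b (log a) + logb b a / log a = (log (log a) + 1) / log b := by
        simp only [logb]; field_simp
    _ ≤ (log N + log a / N) / log b := by gcongr
    _ = logb b N + logb b a / N := by simp only [logb]; ring

/-- For `a > 1`, the function `N ↦ log₂ N + log₂ a / N` on `(0,∞)` attains
its minimum at `N = ln a`. -/
theorem stmt_6 (a : ℝ) (ha : 1 < a) (N : ℝ) (hN : 0 < N) :
    Real.logb 2 N + Real.logb 2 a / N ≥
      Real.logb 2 (Real.log a) + Real.logb 2 a / Real.log a :=
  logb_log_add_logb_div_log_le one_lt_two ha hN
end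

section
/- Let p be real with 0 < p < 1, let n and N be positive integers, and let ε₁ be real with 0 < ε₁ < 1. Then log₂(N·((1+2p-p²)^n - 1)·(2^n/ε₁)^{1/N}) / (n·(1 - log₂(1+2p-p²))) < (log₂(N·(1+2p-p²)) + (1 - log₂ ε₁)/N) / (1 - log₂(1+2p-p²)). -/
open Real

/-- The threshold `β_Th` is bounded by a constant independent of `n`. -/
theorem stmt_7 (p : ℝ) (hp0 : 0 < p) (hp1 : p < 1) (n N : ℕ) (hn : 0 < n) (hN : 0 < N)
    (ε₁ : ℝ) (hε0 : 0 < ε₁) (hε1 : ε₁ < 1) :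
    Real.logb 2 ((N : ℝ) * ((1 + 2 * p - p ^ 2) ^ n - 1) *
        ((2 ^ n / ε₁) ^ ((1 : ℝ) / (N : ℝ)))) /
      ((n : ℝ) * (1 - Real.logb 2 (1 + 2 * p - p ^ 2))) <
    (Real.logb 2 ((N : ℝ) * (1 + 2 * p - p ^ 2)) + (1 - Real.logb 2 ε₁) / (N : ℝ)) /
      (1 - Real.logb 2 (1 + 2 * p - p ^ 2)) := by
  set c : ℝ := 1 + 2 * p - p ^ 2 with hc
  have hc1 : 1 < c := by nlinarith
  have hc2 : c < 2 := by nlinarith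
  have hc0 : 0 < c := by linarith
  have hn' : (1 : ℝ) ≤ n := by exact_mod_cast hn
  have hN' : (0 : ℝ) < N := by exact_mod_cast hN
  have hN1 : (1 : ℝ) ≤ N := by exact_mod_cast hN
  have hlc0 : 0 ≤ logb 2 c := Real.logb_nonneg (by norm_num) hc1.le
  have hlc1 : logb 2 c < 1 := by
    have h := Real.logb_lt_logb (b := 2) (by norm_num) hc0 hc2
    simpa using h
  have hd : 0 < 1 - logb 2 c := by linarith
  have hcn1 : 1 < c ^ n := one_lt_pow₀ hc1 hn.ne'
  have hr : (0 : ℝ) < (2 ^ n / ε₁) ^ ((1 : ℝ) / (N : ℝ)) :=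
    Real.rpow_pos_of_pos (by positivity) _
  have h2n : logb 2 ((2 : ℝ) ^ n) = n := by
    rw [Real.logb_pow]; simp
  have hlogr : logb 2 ((2 ^ n / ε₁) ^ ((1 : ℝ) / (N : ℝ)))
      = (1 / (N : ℝ)) * ((n : ℝ) - logb 2 ε₁) := by
    rw [Real.logb, Real.log_rpow (by positivity), mul_div_assoc, ← Real.logb,
      Real.logb_div (by positivity) hε0.ne', h2n]
  have hA : logb 2 ((N : ℝ) * (c ^ n - 1) * ((2 ^ n / ε₁) ^ ((1 : ℝ) / (N : ℝ))))
      = logb 2 N + logb 2 (c ^ n - 1) + (1 / (N : ℝ)) * ((n : ℝ) - logb 2 ε₁) := by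
    rw [Real.logb_mul (mul_pos hN' (by linarith : (0:ℝ) < c ^ n - 1)).ne' hr.ne',
      Real.logb_mul hN'.ne' (by nlinarith : c ^ n - 1 ≠ 0), hlogr]
  have hY : logb 2 ((N : ℝ) * c) = logb 2 N + logb 2 c :=
    Real.logb_mul (by positivity) hc0.ne'
  have hkey : logb 2 (c ^ n - 1) < (n : ℝ) * logb 2 c := by
    have h := Real.logb_lt_logb (b := 2) (by norm_num) (by linarith) (by linarith : c ^ n - 1 < c ^ n)
    rwa [Real.logb_pow] at h
  have hLN : 0 ≤ logb 2 N := Real.logb_nonneg (by norm_num) hN1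
  have hLε : logb 2 ε₁ < 0 := Real.logb_neg (by norm_num) hε0 hε1
  rw [div_lt_div_iff₀ (by positivity) hd, hA, hY]
  have hu : (0 : ℝ) < 1 / N := by positivity
  have h1 : 0 ≤ ((n : ℝ) - 1) * logb 2 N := by nlinarith
  have h2 : 0 ≤ ((n : ℝ) - 1) * (-(logb 2 ε₁)) * (1 / N) := by
    apply mul_nonneg (mul_nonneg (by linarith) (by linarith)) hu.le
  have hdiv : (1 - logb 2 ε₁) / (N : ℝ) = (1 - logb 2 ε₁) * (1 / N) := by ring
  rw [hdiv]
  nlinarith [mul_lt_mul_of_pos_right hkey hd, mul_pos hu hd, hd.le,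
    mul_nonneg h1 hd.le, mul_nonneg h2 hd.le]
end

section
/- Let p be real with 0 < p < 1, let n ≥ 2 be an integer, and let ε₂ be real with 0 < ε₂ < 2^n. Set N_Th := log₂((1 + ε₂/2^n)^{1/n} - 1) / log₂ p. Then (n + log₂(n/(ε₂·ln 2))) / log₂(1/p) > N_Th > (n + log₂(n/ε₂)) / log₂(1/p). -/
/-- The threshold `N_Th` on the number of reads satisfies
`(n + log₂(n/(ε₂·ln 2)))/log₂(1/p) > N_Th > (n + log₂(n/ε₂))/log₂(1/p)`. -/
theorem stmt_10 (p : ℝ) (hp0 : 0 < p) (hp1 : p < 1) (n : ℕ) (hn : 2 ≤ n)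
    (ε₂ : ℝ) (hε0 : 0 < ε₂) (hε1 : ε₂ < 2 ^ n) :
    ((n : ℝ) + Real.logb 2 ((n : ℝ) / (ε₂ * Real.log 2))) / Real.logb 2 (1 / p) >
      Real.logb 2 ((1 + ε₂ / 2 ^ n) ^ ((1 : ℝ) / (n : ℝ)) - 1) / Real.logb 2 p ∧
    Real.logb 2 ((1 + ε₂ / 2 ^ n) ^ ((1 : ℝ) / (n : ℝ)) - 1) / Real.logb 2 p >
      ((n : ℝ) + Real.logb 2 ((n : ℝ) / ε₂)) / Real.logb 2 (1 / p) := by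
  obtain ⟨m, rfl⟩ : ∃ m, n = m + 2 := ⟨n - 2, by omega⟩
  set n' : ℕ := m + 2 with hn'
  have hnR : (0:ℝ) < (n' : ℝ) := by positivity
  have h2n : (0:ℝ) < 2 ^ n' := by positivity
  set x : ℝ := ε₂ / 2 ^ n' with hxdef
  have hx0 : 0 < x := div_pos hε0 h2n
  have hx1 : x < 1 := (div_lt_one h2n).mpr hε1
  have hlog2 : (0:ℝ) < Real.log 2 := Real.log_pos one_lt_two
  set L : ℝ := (1 + x) ^ ((1 : ℝ) / (n' : ℝ)) - 1 with hLdef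
  -- lower bound: x * log 2 / n < L
  have hlogx : x * Real.log 2 < Real.log (1 + x) := by
    have h := strictConcaveOn_log_Ioi.2 (show (1:ℝ) ∈ Set.Ioi (0:ℝ) by norm_num)
      (show (2:ℝ) ∈ Set.Ioi (0:ℝ) by norm_num) (by norm_num)
      (show (0:ℝ) < 1 - x by linarith) hx0 (by ring)
    have e1 : (1 - x) • (1:ℝ) + x • (2:ℝ) = 1 + x := by simp [smul_eq_mul]; ring
    rw [e1] at h
    simpa [Real.log_one, smul_eq_mul] using h
  have hL_lb : x * Real.log 2 / n' < L := by
    have h1 : (1 + x) ^ ((1:ℝ)/(n':ℝ)) = Real.exp (Real.log (1+x) * (1/(n':ℝ))) :=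
      Real.rpow_def_of_pos (by linarith) _
    have h2 : Real.log (1+x) * (1/(n':ℝ)) + 1 ≤ Real.exp (Real.log (1+x) * (1/(n':ℝ))) :=
      Real.add_one_le_exp _
    have h3 : x * Real.log 2 / n' < Real.log (1+x) * (1/(n':ℝ)) := by
      rw [mul_one_div, div_lt_div_iff₀ hnR hnR]
      nlinarith
    simp only [hLdef, h1]
    linarith
  -- upper bound: L < x / n
  have hL_ub : L < x / n' := by
    set a : ℝ := x / n' with hadef
    have ha0 : 0 < a := div_pos hx0 hnR
    have hb : 1 + x < (1 + a) ^ n' := by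
      have h1 : 1 + (m:ℝ) * a ≤ (1 + a) ^ m := one_add_mul_le_pow (by linarith) m
      have h2 : (1 + a) ^ n' = (1 + a) ^ m * (1 + a) ^ 2 := by rw [hn', pow_add]
      have hxa : x = a * (n' : ℝ) := by
        rw [hadef]; field_simp
      have hm0 : (0:ℝ) ≤ (m:ℝ) := Nat.cast_nonneg m
      have hcast : (n' : ℝ) = (m : ℝ) + 2 := by push_cast [hn']; ring
      rw [h2, hxa, hcast]
      nlinarith [mul_le_mul_of_nonneg_right h1 (sq_nonneg (1+a)), mul_pos ha0 ha0,
        mul_pos (mul_pos ha0 ha0) ha0, mul_nonneg hm0 (le_of_lt (mul_pos ha0 ha0))]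
    have h4 : (1 + x) ^ ((1:ℝ)/(n':ℝ)) < ((1 + a) ^ n') ^ ((1:ℝ)/(n':ℝ)) :=
      Real.rpow_lt_rpow (by linarith) hb (by positivity)
    have h5 : ((1 + a) ^ n') ^ ((1:ℝ)/(n':ℝ)) = 1 + a := by
      rw [← Real.rpow_natCast (1 + a) n', ← Real.rpow_mul (by linarith),
        mul_one_div, div_self (ne_of_gt hnR), Real.rpow_one]
    rw [h5] at h4
    simp only [hLdef, hadef]
    linarith
  have hL0 : 0 < L := lt_trans (by positivity) hL_lb
  -- logb facts
  have hD : Real.logb 2 p < 0 := Real.logb_neg one_lt_two hp0 hp1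
  have hinv : Real.logb 2 (1 / p) = -Real.logb 2 p := by
    rw [one_div, Real.logb_inv]
  have hinv0 : 0 < Real.logb 2 (1 / p) := by rw [hinv]; linarith
  -- key products
  have key1 : (1:ℝ) < 2 ^ n' * ((n' : ℝ) / (ε₂ * Real.log 2)) * L := by
    have hc : (0:ℝ) < 2 ^ n' * ((n' : ℝ) / (ε₂ * Real.log 2)) := by positivity
    have heq : 2 ^ n' * ((n' : ℝ) / (ε₂ * Real.log 2)) * (x * Real.log 2 / n') = 1 := by
      rw [hxdef]; field_simp
    calc (1:ℝ) = 2 ^ n' * ((n' : ℝ) / (ε₂ * Real.log 2)) * (x * Real.log 2 / n') := heq.symm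
      _ < _ := by exact mul_lt_mul_of_pos_left hL_lb hc
  have key2 : 2 ^ n' * ((n' : ℝ) / ε₂) * L < 1 := by
    have hc : (0:ℝ) < 2 ^ n' * ((n' : ℝ) / ε₂) := by positivity
    have heq : 2 ^ n' * ((n' : ℝ) / ε₂) * (x / n') = 1 := by
      rw [hxdef]; field_simp
    calc 2 ^ n' * ((n' : ℝ) / ε₂) * L < 2 ^ n' * ((n' : ℝ) / ε₂) * (x / n') :=
        mul_lt_mul_of_pos_left hL_ub hc
      _ = 1 := heq
  -- convert to logb sums
  have hlogb2n : Real.logb 2 ((2:ℝ) ^ n') = (n' : ℝ) := by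
    simp [Real.logb_pow, Real.logb_self_eq_one]
  have hsum1 : 0 < (n' : ℝ) + Real.logb 2 ((n' : ℝ) / (ε₂ * Real.log 2)) + Real.logb 2 L := by
    have h := Real.logb_pos one_lt_two key1
    rw [Real.logb_mul (by positivity) (ne_of_gt hL0),
      Real.logb_mul (by positivity) (by positivity), hlogb2n] at h
    linarith
  have hsum2 : (n' : ℝ) + Real.logb 2 ((n' : ℝ) / ε₂) + Real.logb 2 L < 0 := by
    have h := Real.logb_neg one_lt_two (by positivity) key2
    rw [Real.logb_mul (by positivity) (ne_of_gt hL0),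
      Real.logb_mul (by positivity) (by positivity), hlogb2n] at h
    linarith
  -- finish
  have hrw : Real.logb 2 L / Real.logb 2 p = -Real.logb 2 L / Real.logb 2 (1 / p) := by
    rw [hinv, div_neg, neg_div, neg_neg]
  constructor
  · rw [show Real.logb 2 ((1 + ε₂ / 2 ^ n') ^ ((1 : ℝ) / (n' : ℝ)) - 1) = Real.logb 2 L from rfl,
      hrw, gt_iff_lt, div_lt_div_iff_of_pos_right hinv0]
    linarith
  · rw [show Real.logb 2 ((1 + ε₂ / 2 ^ n') ^ ((1 : ℝ) / (n' : ℝ)) - 1) = Real.logb 2 L from rfl,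
      hrw, gt_iff_lt, div_lt_div_iff_of_pos_right hinv0]
    linarith
end
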